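/- Let C be a binary linear [n,k,d]-code with maximum weight d'. If d' > n + p - d for all p with 0 ≤ p < d' + d - n, then the code Ĉ obtained by appending p zero columns and the all-one row has minimum distance n + p - d' < d. -/
import Mathlib


/-- The linear map appending `p` zero coordinates to a vector of length `n`. -/
def padMap (n p : ℕ) : (Fin n → ZMod 2) →ₗ[ZMod 2] (Fin (n + p) → ZMod 2) where
  toFun c := fun i => if h : (i : ℕ) < n then c ⟨i, h⟩ else 0
  map_add' x y := by funext i; by_cases h : (i : ℕ) < n <;> simp [h]
  map_smul' m x := by funext i; by_cases h : (i : ℕ) < n <;> simp [h]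


lemma norm_pad (n p : ℕ) (c : Fin n → ZMod 2) :
    hammingNorm (padMap n p c) = hammingNorm c := by
  simp only [hammingNorm, padMap, LinearMap.coe_mk, AddHom.coe_mk]
  refine Finset.card_bij' (fun (i : Fin (n+p)) hi => (⟨(i : ℕ), by
      by_contra h
      simp [h] at hi⟩ : Fin n)) (fun (j : Fin n) _ => Fin.castLE (Nat.le_add_right n p) j)
      ?_ ?_ ?_ ?_
  · intro i hi
    simp only [Finset.mem_filter, Finset.mem_univ, true_and] at hi ⊢
    by_cases h : (i : ℕ) < n
    · simpa [h] using hi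
    · simp [h] at hi
  · intro j hj
    simp only [Finset.mem_filter, Finset.mem_univ, true_and] at hj ⊢
    simpa [j.isLt] using hj
  · intro i hi; ext; simp
  · intro j hj; ext; simp

lemma norm_add_one {m : ℕ} (x : Fin m → ZMod 2) :
    hammingNorm (x + (fun _ => 1)) = m - hammingNorm x := by
  have key : ∀ a : ZMod 2, a + 1 ≠ 0 ↔ ¬ a ≠ 0 := by decide
  simp only [hammingNorm]
  have h1 : (Finset.univ.filter fun i => ((x + fun _ => 1 : Fin m → ZMod 2) i) ≠ 0)
      = Finset.univ.filter fun i => ¬ x i ≠ 0 := by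
    apply Finset.filter_congr
    intro i _
    simpa using key (x i)
  rw [h1, ← Finset.compl_filter, Finset.card_compl]
  simp

/-- Let C be a binary [n,k,d]-code with maximum weight d'. For every p with
p < d' + d - n (i.e. d' > n + p - d), assuming d' < n + p, the code Ĉ obtained by appending
p zero columns and adjoining the all-one row has minimum distance n + p - d' < d. -/
theorem stmt_16 (n k d d' : ℕ) (C : Submodule (ZMod 2) (Fin n → ZMod 2))
    (hk : Module.finrank (ZMod 2) C = k)
    (hd_lb : ∀ c ∈ C, c ≠ 0 → d ≤ hammingNorm c)
    (hd_ex : ∃ c ∈ C, c ≠ 0 ∧ hammingNorm c = d)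
    (hd'_ub : ∀ c ∈ C, hammingNorm c ≤ d')
    (hd'_ex : ∃ c ∈ C, hammingNorm c = d') :
    ∀ p, p < d' + d - n → d' < n + p →
      ∀ (v : Fin (n + p) → ZMod 2), v = (fun _ => 1) →
      ∀ (Chat : Submodule (ZMod 2) (Fin (n + p) → ZMod 2)),
        Chat = Submodule.map (padMap n p) C ⊔ Submodule.span (ZMod 2) {v} →
        ((∀ c ∈ Chat, c ≠ 0 → n + p - d' ≤ hammingNorm c) ∧
          (∃ c ∈ Chat, c ≠ 0 ∧ hammingNorm c = n + p - d') ∧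
          n + p - d' < d) := by
  intro p hp hlt v hv Chat hChat
  subst hv hChat
  have hdd : n + p - d' < d := by omega
  refine ⟨?_, ?_, hdd⟩
  · -- lower bound
    intro x hx hx0
    rw [Submodule.mem_sup] at hx
    obtain ⟨y, hy, z, hz, rfl⟩ := hx
    obtain ⟨c, hc, rfl⟩ := Submodule.mem_map.mp hy
    rw [Submodule.mem_span_singleton] at hz
    obtain ⟨a, rfl⟩ := hz
    rcases (by decide : ∀ b : ZMod 2, b = 0 ∨ b = 1) a with rfl | rfl
    · simp only [zero_smul, add_zero] at hx0 ⊢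
      have hc0 : c ≠ 0 := by
        rintro rfl
        exact hx0 (map_zero _)
      rw [norm_pad]
      have := hd_lb c hc hc0
      omega
    · rw [one_smul]
      rw [norm_add_one (padMap n p c), norm_pad]
      have := hd'_ub c hc
      omega
  · -- existence
    obtain ⟨c, hc, hcd'⟩ := hd'_ex
    refine ⟨padMap n p c + (fun _ => 1), ?_, ?_, ?_⟩
    · apply Submodule.add_mem_sup (Submodule.mem_map_of_mem hc)
      exact Submodule.mem_span_singleton_self _
    · intro h0
      have h1 : hammingNorm (padMap n p c + (fun _ => 1)) = n + p - d' := by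
        rw [norm_add_one, norm_pad, hcd']
      rw [h0, hammingNorm_zero] at h1
      omega
    · rw [norm_add_one, norm_pad, hcd']
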